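/- arXiv:2511.09595 — 2 statements merged into one kernel-verified Lean document; each statement's English description precedes it below -/
import Mathlib

section
/- Let A be an AB3 abelian category in which for any two objects V, D there exists a universal extension of V by D, i.e. some η ∈ Ext¹(V^{(X)}, D) for a nonempty set X (where V^{(X)} denotes the X-indexed coproduct of copies of V) such that the map Hom(V, V^{(X)}) → Ext¹(V, D), f ↦ η·f, is surjective. Then for every nonempty set I, family {A_i} and object B, the canonical map Ext¹(⨁_{i∈I} A_i, B) → ∏_{i∈I} Ext¹(A_i, B) given by restriction along the coproduct inclusions is surjective. -/
open CategoryTheory CategoryTheory.Limits CategoryTheory.Abelian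

universe w v u

/-- if `A` is an AB3 abelian category in which every pair of objects `V, D`
admits a universal extension (some `η ∈ Ext¹(V^{(X)}, D)`, `X` a nonempty set, such that
every element of `Ext¹(V, D)` is a pullback `η·f` for some `f : V ⟶ V^{(X)}`), then for
every nonempty `I`, family `{A_i}` and object `B`, the canonical map
`Ext¹(⨁ A_i, B) → ∏ Ext¹(A_i, B)` is surjective. -/
theorem stmt6 {A : Type u} [Category.{v} A] [Abelian A] [HasCoproducts.{v} A]
    [CategoryTheory.HasExt.{w} A]
    (huniv : ∀ (V D : A), ∃ (X : Type v) (_ : Nonempty X)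
      (η : Ext (∐ (fun _ : X => V)) D 1),
      ∀ ε : Ext V D 1, ∃ f : V ⟶ ∐ (fun _ : X => V),
        ε = (Ext.mk₀ f).comp η (zero_add 1)) :
    ∀ (I : Type v), Nonempty I → ∀ (f : I → A) (B : A),
      Function.Surjective (fun (η : Ext (∐ f) B 1) (i : I) =>
        (Ext.mk₀ (Sigma.ι f i)).comp η (zero_add 1)) := by
  classical
  intro I _ f B ε
  obtain ⟨X, _, η, hη⟩ := huniv (∐ f) B
  -- retraction π i : ∐ f ⟶ f i
  let π : ∀ i : I, (∐ f ⟶ f i) := fun i =>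
    Sigma.desc (fun j => if h : j = i then eqToHom (by rw [h]) else 0)
  have hπ : ∀ i : I, Sigma.ι f i ≫ π i = 𝟙 (f i) := by
    intro i
    simp [π]
  -- choose g i realizing the pullback of ε i along π i
  have hg : ∀ i : I, ∃ g : ∐ f ⟶ ∐ (fun _ : X => ∐ f),
      (Ext.mk₀ (π i)).comp (ε i) (zero_add 1) = (Ext.mk₀ g).comp η (zero_add 1) :=
    fun i => hη _
  choose g hgspec using hg
  refine ⟨(Ext.mk₀ (Sigma.desc (fun i => Sigma.ι f i ≫ g i))).comp η (zero_add 1), ?_⟩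
  funext i
  dsimp only
  rw [← Ext.comp_assoc_of_second_deg_zero, Ext.mk₀_comp_mk₀, Sigma.ι_desc,
    ← Ext.mk₀_comp_mk₀, Ext.comp_assoc_of_second_deg_zero, ← hgspec i,
    ← Ext.comp_assoc_of_second_deg_zero, Ext.mk₀_comp_mk₀, hπ i, Ext.mk₀_id_comp]
end

section
/- Let R be the product ring ∏_{n∈ℕ} ℤ/2 and I = ⨁_{n∈ℕ} R_n the ideal of eventually-zero sequences, where R_n is the ideal of elements supported at n. Then the class C_I = Gen(I) = { M ∈ Mod R : I·M = M } is closed under submodules; explicitly, M ∈ C_I if and only if M = ⨁_{n∈ℕ} e_n M where e_n is the n-th canonical idempotent, and this property passes to submodules. -/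
/-- The product ring `R = ∏_{n ∈ ℕ} ℤ/2`. -/
abbrev R2 : Type := ℕ → ZMod 2

/-- The ideal `I = ⨁_{n ∈ ℕ} e_n R` of finitely supported (eventually-zero) elements,
generated by the canonical idempotents `e_n = Pi.single n 1`. -/
def Ifin : Ideal R2 := Ideal.span (Set.range fun n => (Pi.single n 1 : R2))

lemma iSup_smul_eq {M : Type} [AddCommGroup M] [Module R2 M]
    (I : ℕ → Ideal R2) (N : Submodule R2 M) :
    (⨆ n, I n) • N = ⨆ n, I n • N := by
  apply le_antisymm
  · apply Submodule.smul_le.2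
    intro r hr n hn
    induction hr using Submodule.iSup_induction' with
    | mem i r hr => exact le_iSup (fun n => I n • N) i (Submodule.smul_mem_smul hr hn)
    | zero => simp
    | add x _ y _ hx hy =>
      rw [add_smul]
      exact Submodule.add_mem _ hx hy
  · exact iSup_le fun n => Submodule.smul_mono_left (le_iSup I n)

lemma char2R (z : R2) : z + z = 0 := by
  funext k
  exact CharTwo.add_self_eq_zero _

/-- Every element of `Ifin` is absorbed by some element of `Ifin`. -/
lemma exists_absorb (a : R2) (ha : a ∈ Ifin) : ∃ e ∈ Ifin, e * a = a := by
  induction ha using Submodule.span_induction with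
  | mem x hx =>
    obtain ⟨n, rfl⟩ := hx
    refine ⟨Pi.single n 1, Ideal.subset_span ⟨n, rfl⟩, ?_⟩
    funext k
    by_cases h : k = n <;> simp [Pi.single_apply, h]
  | zero => exact ⟨0, zero_mem _, by simp⟩
  | add x y hx hy ihx ihy =>
    obtain ⟨e₁, he₁, h1⟩ := ihx
    obtain ⟨e₂, he₂, h2⟩ := ihy
    refine ⟨e₁ + e₂ + e₁ * e₂,
      add_mem (add_mem he₁ he₂) (Ideal.mul_mem_right _ _ he₁), ?_⟩
    have hx3 : (e₁ + e₂ + e₁ * e₂) * x = x := by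
      have h : e₂ * (e₁ * x) = e₂ * x := by rw [h1]
      calc (e₁ + e₂ + e₁ * e₂) * x = e₁ * x + (e₂ * (e₁ * x) + e₂ * x) := by ring
        _ = x + (e₂ * x + e₂ * x) := by rw [h, h1]
        _ = x := by rw [char2R, add_zero]
    have hy3 : (e₁ + e₂ + e₁ * e₂) * y = y := by
      have h : e₁ * (e₂ * y) = e₁ * y := by rw [h2]
      calc (e₁ + e₂ + e₁ * e₂) * y = e₂ * y + (e₁ * (e₂ * y) + e₁ * y) := by ring
        _ = y + (e₁ * y + e₁ * y) := by rw [h, h2]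
        _ = y := by rw [char2R, add_zero]
    rw [mul_add, hx3, hy3]
  | smul r x hx ihx =>
    obtain ⟨e, he, h⟩ := ihx
    refine ⟨e, he, ?_⟩
    rw [smul_eq_mul, mul_left_comm, h]

/-- Every element of a module with `Ifin • ⊤ = ⊤` is absorbed. -/
lemma exists_absorb_module {M : Type} [AddCommGroup M] [Module R2 M]
    (h : Ifin • (⊤ : Submodule R2 M) = ⊤) (x : M) : ∃ e ∈ Ifin, e • x = x := by
  have hx : x ∈ Ifin • (⊤ : Submodule R2 M) := by rw [h]; trivial
  clear h
  refine Submodule.smul_induction_on hx ?_ ?_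
  · intro a ha m _
    obtain ⟨e, he, hea⟩ := exists_absorb a ha
    exact ⟨e, he, by rw [← mul_smul, hea]⟩
  · rintro x y ⟨e₁, he₁, h1⟩ ⟨e₂, he₂, h2⟩
    refine ⟨e₁ + e₂ + e₁ * e₂,
      add_mem (add_mem he₁ he₂) (Ideal.mul_mem_right _ _ he₁), ?_⟩
    have charM : ∀ z : M, z + z = 0 := by
      intro z
      have : ((1 : R2) + 1) • z = z + z := by rw [add_smul, one_smul]
      rw [← this, char2R (1 : R2), zero_smul]
    have hx3 : (e₁ + e₂ + e₁ * e₂) • x = x := by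
      have h : e₂ • (e₁ • x) = e₂ • x := by rw [h1]
      calc (e₁ + e₂ + e₁ * e₂) • x = e₁ • x + e₂ • x + (e₂ * e₁) • x := by
            rw [add_smul, add_smul, mul_comm e₁ e₂]
        _ = x + (e₂ • x + e₂ • x) := by rw [mul_smul, h, h1, add_assoc]
        _ = x := by rw [charM, add_zero]
    have hy3 : (e₁ + e₂ + e₁ * e₂) • y = y := by
      have h : e₁ • (e₂ • y) = e₁ • y := by rw [h2]
      calc (e₁ + e₂ + e₁ * e₂) • y = e₁ • y + e₂ • y + (e₁ * e₂) • y := by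
            rw [add_smul, add_smul]
        _ = e₁ • y + y + e₁ • y := by rw [mul_smul, h, h2]
        _ = y + (e₁ • y + e₁ • y) := by abel
        _ = y := by rw [charM, add_zero]
    rw [smul_add, hx3, hy3]

/-- the class `C_I = {M : I·M = M}` is characterized by
`M = ⨁_n e_n M` (i.e. the submodules `e_n M` generate `M`), and it is closed under
submodules. -/
theorem stmt11 (M : Type) [AddCommGroup M] [Module R2 M] :
    ((Ifin • (⊤ : Submodule R2 M) = ⊤) ↔
      (⨆ n : ℕ, (Ideal.span {(Pi.single n 1 : R2)}) • (⊤ : Submodule R2 M)) = ⊤) ∧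
    (∀ N : Submodule R2 M, Ifin • (⊤ : Submodule R2 M) = ⊤ →
      Ifin • (⊤ : Submodule R2 N) = ⊤) := by
  constructor
  · have h1 : Ifin = ⨆ n : ℕ, Ideal.span {(Pi.single n 1 : R2)} := by
      rw [Ifin, Ideal.span, Submodule.span_range_eq_iSup]
    rw [h1, iSup_smul_eq]
  · intro N h
    rw [eq_top_iff]
    intro x _
    obtain ⟨e, he, hex⟩ := exists_absorb_module h (x : M)
    have : e • x = x := Subtype.ext (by simpa using hex)
    rw [← this]
    exact Submodule.smul_mem_smul he Submodule.mem_top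
end
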